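/- arXiv:2507.14509 — 6 statements merged into one kernel-verified Lean document; each statement's English description precedes it below -/
import Mathlib

section
/- Let (G,c) be a t-coloured graph and T=(k_1,…,k_t) a colour budget. Suppose there is a colour i* with c_{i*}(V(G)) = k_{i*}. Let X = {v ∈ V(G) : i* ∈ c(v)} and, for each i, let k'_i = k_i − c_i(X). Then G has a T-fair vertex cover if and only if G − X has a (k'_1,…,k'_t)-fair vertex cover (with colouring restricted to V(G)∖X). -/
open Finset

/-! Every vertex of colour `i*` must lie in a `T`-fair vertex cover, because the cover already
needs all `k_{i*} = c_{i*}(V(G))` of them. So `T`-fair covers `S` of `G` correspond to covers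
`S \ X` of `G - X`, with inverse `S' ↦ S' ∪ X`, and since `X` is removed from or added to a
disjoint set, every colour count shifts by exactly `c_i(X)`. -/

lemma Finset.filter_univ_subset_of_card_filter_eq {V : Type*} [Fintype V] (p : V → Prop)
    [DecidablePred p] {S : Finset V} (h : #(S.filter p) = #(univ.filter p)) :
    univ.filter p ⊆ S := by
  have hS : S.filter p = univ.filter p :=
    eq_of_subset_of_card_le (filter_subset_filter p (subset_univ S)) h.ge
  exact hS ▸ filter_subset p S

section

variable {V : Type*} [DecidableEq V]

lemma Finset.card_filter_union_of_disjoint (q : V → Prop) [DecidablePred q]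
    {S X : Finset V} (h : Disjoint S X) :
    #((S ∪ X).filter q) = #(S.filter q) + #(X.filter q) := by
  rw [filter_union, card_union_of_disjoint (disjoint_filter_filter h)]

lemma Finset.card_filter_sdiff_add_card_filter (q : V → Prop) [DecidablePred q]
    {S X : Finset V} (h : X ⊆ S) :
    #((S \ X).filter q) + #(X.filter q) = #(S.filter q) := by
  rw [← card_filter_union_of_disjoint q sdiff_disjoint, sdiff_union_of_subset h]

variable (G : SimpleGraph V) {X : Finset V}

lemma SimpleGraph.covers_sdiff {S : Finset V} (hS : ∀ u v, G.Adj u v → u ∈ S ∨ v ∈ S) :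
    ∀ u v, G.Adj u v → u ∉ X → v ∉ X → u ∈ S \ X ∨ v ∈ S \ X := by
  intro u v huv hu hv
  rcases hS u v huv with h | h
  · exact .inl (mem_sdiff.2 ⟨h, hu⟩)
  · exact .inr (mem_sdiff.2 ⟨h, hv⟩)

lemma SimpleGraph.covers_union {S' : Finset V}
    (hS' : ∀ u v, G.Adj u v → u ∉ X → v ∉ X → u ∈ S' ∨ v ∈ S') :
    ∀ u v, G.Adj u v → u ∈ S' ∪ X ∨ v ∈ S' ∪ X := by
  intro u v huv
  by_cases hu : u ∈ X
  · exact .inl (mem_union_right S' hu)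
  by_cases hv : v ∈ X
  · exact .inr (mem_union_right S' hv)
  simpa only [mem_union] using (hS' u v huv hu hv).imp .inl .inl

end

theorem stmt2_general {V : Type*} [Fintype V] [DecidableEq V] (G : SimpleGraph V)
    {t : ℕ} (c : V → Finset (Fin t))
    (k : Fin t → ℕ) (istar : Fin t)
    (h : (Finset.univ.filter (fun v => istar ∈ c v)).card = k istar) :
    (∃ S : Finset V,
        (∀ u v, G.Adj u v → u ∈ S ∨ v ∈ S) ∧
        (∀ i, (S.filter (fun v => i ∈ c v)).card = k i))
    ↔ (∃ S' : Finset V,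
        (∀ v ∈ S', istar ∉ c v) ∧
        (∀ u v, G.Adj u v → istar ∉ c u → istar ∉ c v → u ∈ S' ∨ v ∈ S') ∧
        (∀ i, ((S'.filter (fun v => i ∈ c v)).card : ℤ)
          = (k i : ℤ)
            - (((Finset.univ.filter (fun v => istar ∈ c v)).filter
                (fun v => i ∈ c v)).card : ℤ))) := by
  set X : Finset V := univ.filter (fun v => istar ∈ c v)
  have mem_X (v : V) : v ∈ X ↔ istar ∈ c v := by simp [X]
  simp only [← mem_X]
  constructor
  · rintro ⟨S, hcov, hcount⟩
    have hXS : X ⊆ S := filter_univ_subset_of_card_filter_eq _ ((hcount istar).trans h.symm)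
    refine ⟨S \ X, fun v hv => (mem_sdiff.1 hv).2, G.covers_sdiff hcov, fun i => ?_⟩
    have := card_filter_sdiff_add_card_filter (fun v => i ∈ c v) hXS
    have := hcount i
    omega
  · rintro ⟨S', hS'X, hcov, hcount⟩
    refine ⟨S' ∪ X, G.covers_union hcov, fun i => ?_⟩
    have := card_filter_union_of_disjoint (fun v => i ∈ c v) (disjoint_left.2 hS'X)
    have := hcount i
    omega

/-- Reduction rule: if colour `i*` satisfies `c_{i*}(V(G)) = k_{i*}`, then, with
`X` the set of vertices of colour `i*`, `G` has a `T`-fair vertex cover iff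
`G - X` has a `(k_i - c_i(X))_i`-fair vertex cover.  A vertex cover of `G - X`
is encoded as a set `S'` disjoint from `X` covering all edges with both
endpoints outside `X`, and the reduced budgets are expressed over `ℤ`. -/
theorem stmt2 {V : Type*} [Fintype V] [DecidableEq V] (G : SimpleGraph V)
    {t : ℕ} (c : V → Finset (Fin t)) (hc : ∀ v, (c v).Nonempty)
    (k : Fin t → ℕ) (istar : Fin t)
    (h : (Finset.univ.filter (fun v => istar ∈ c v)).card = k istar) :
    (∃ S : Finset V,
        (∀ u v, G.Adj u v → u ∈ S ∨ v ∈ S) ∧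
        (∀ i, (S.filter (fun v => i ∈ c v)).card = k i))
    ↔ (∃ S' : Finset V,
        (∀ v ∈ S', istar ∉ c v) ∧
        (∀ u v, G.Adj u v → istar ∉ c u → istar ∉ c v → u ∈ S' ∨ v ∈ S') ∧
        (∀ i, ((S'.filter (fun v => i ∈ c v)).card : ℤ)
          = (k i : ℤ)
            - (((Finset.univ.filter (fun v => istar ∈ c v)).filter
                (fun v => i ∈ c v)).card : ℤ))) :=
  stmt2_general G c k istar h
end

section
/- Let (G,c) be a t-coloured graph, T=(k_1,…,k_t) a colour budget, and v a vertex of G. Define T' by k'_i = k_i − 1 if i ∈ c(v) and k'_i = k_i otherwise; define T'' by k''_i = k_i − c_i(N(v)). Then G has a T-fair vertex cover if and only if (G − v has a T'-fair vertex cover) or (G − N(v) has a T''-fair vertex cover). -/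
open Finset

/-- Branching rule: `G` has a `T`-fair vertex cover iff `G - v` has a `T'`-fair
vertex cover or `G - N(v)` has a `T''`-fair vertex cover, where
`k'_i = k_i - 1` for `i ∈ c(v)` (else `k_i`) and `k''_i = k_i - c_i(N(v))`
(budgets expressed over `ℤ`).  Vertex covers of the deleted graphs are encoded
as sets avoiding the deleted vertices and covering the surviving edges. -/
theorem stmt3 {V : Type*} [Fintype V] [DecidableEq V] (G : SimpleGraph V)
    [DecidableRel G.Adj]
    {t : ℕ} (c : V → Finset (Fin t)) (hc : ∀ w, (c w).Nonempty)
    (k : Fin t → ℕ) (v : V) :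
    (∃ S : Finset V,
        (∀ a b, G.Adj a b → a ∈ S ∨ b ∈ S) ∧
        (∀ i, (S.filter (fun w => i ∈ c w)).card = k i))
    ↔ ((∃ S' : Finset V,
          v ∉ S' ∧
          (∀ a b, G.Adj a b → a ≠ v → b ≠ v → a ∈ S' ∨ b ∈ S') ∧
          (∀ i, ((S'.filter (fun w => i ∈ c w)).card : ℤ)
            = (k i : ℤ) - (if i ∈ c v then 1 else 0)))
      ∨ (∃ S'' : Finset V,
          (∀ w ∈ S'', ¬ G.Adj v w) ∧
          (∀ a b, G.Adj a b → ¬ G.Adj v a → ¬ G.Adj v b → a ∈ S'' ∨ b ∈ S'') ∧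
          (∀ i, ((S''.filter (fun w => i ∈ c w)).card : ℤ)
            = (k i : ℤ)
              - (((G.neighborFinset v).filter (fun w => i ∈ c w)).card : ℤ)))) := by
  constructor
  · rintro ⟨S, hcov, hcard⟩
    by_cases hv : v ∈ S
    · left
      refine ⟨S.erase v, notMem_erase _ _, ?_, ?_⟩
      · intro a b hab ha hb
        rcases hcov a b hab with h | h
        · exact Or.inl (mem_erase.2 ⟨ha, h⟩)
        · exact Or.inr (mem_erase.2 ⟨hb, h⟩)
      · intro i
        rw [filter_erase]
        by_cases hi : i ∈ c v
        · have hvmem : v ∈ S.filter (fun w => i ∈ c w) := mem_filter.2 ⟨hv, hi⟩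
          rw [card_erase_of_mem hvmem, hcard i]
          have h1 : 1 ≤ k i := by
            rw [← hcard i]; exact card_pos.2 ⟨v, hvmem⟩
          simp only [if_pos hi]
          omega
        · have : v ∉ S.filter (fun w => i ∈ c w) := fun h => hi (mem_filter.1 h).2
          rw [erase_eq_of_notMem this, hcard i]
          simp [hi]
    · right
      refine ⟨S \ G.neighborFinset v, ?_, ?_, ?_⟩
      · intro w hw hadj
        exact (mem_sdiff.1 hw).2 (by simpa using hadj)
      · intro a b hab ha hb
        rcases hcov a b hab with h | h
        · exact Or.inl (mem_sdiff.2 ⟨h, by simpa using ha⟩)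
        · exact Or.inr (mem_sdiff.2 ⟨h, by simpa using hb⟩)
      · intro i
        have hsub : G.neighborFinset v ⊆ S := by
          intro w hw
          rcases hcov v w (by simpa using hw) with h | h
          · exact absurd h hv
          · exact h
        have heq : (S \ G.neighborFinset v).filter (fun w => i ∈ c w)
            = S.filter (fun w => i ∈ c w) \ (G.neighborFinset v).filter (fun w => i ∈ c w) := by
          ext w
          simp only [mem_filter, mem_sdiff]
          tauto
        have hle := card_le_card (filter_subset_filter (fun w => i ∈ c w) hsub)
        rw [heq, card_sdiff_of_subset (filter_subset_filter _ hsub)]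
        have := hcard i
        omega
  · rintro (⟨S', hv, hcov, hcard⟩ | ⟨S'', hnadj, hcov, hcard⟩)
    · refine ⟨insert v S', ?_, ?_⟩
      · intro a b hab
        by_cases ha : a = v
        · exact Or.inl (by simp [ha])
        by_cases hb : b = v
        · exact Or.inr (by simp [hb])
        rcases hcov a b hab ha hb with h | h
        · exact Or.inl (mem_insert_of_mem h)
        · exact Or.inr (mem_insert_of_mem h)
      · intro i
        rw [filter_insert]
        by_cases hi : i ∈ c v
        · rw [if_pos hi, card_insert_of_notMem (fun h => hv (mem_filter.1 h).1)]
          have := hcard i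
          simp only [if_pos hi] at this
          omega
        · rw [if_neg hi]
          have := hcard i
          simp only [if_neg hi, sub_zero] at this
          exact_mod_cast this
    · have hdisj : Disjoint S'' (G.neighborFinset v) := by
        rw [disjoint_left]
        intro w hw hw'
        exact hnadj w hw (by simpa using hw')
      refine ⟨S'' ∪ G.neighborFinset v, ?_, ?_⟩
      · intro a b hab
        by_cases ha : G.Adj v a
        · exact Or.inl (mem_union_right _ (by simpa using ha))
        by_cases hb : G.Adj v b
        · exact Or.inr (mem_union_right _ (by simpa using hb))
        rcases hcov a b hab ha hb with h | h
        · exact Or.inl (mem_union_left _ h)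
        · exact Or.inr (mem_union_left _ h)
      · intro i
        rw [filter_union, card_union_of_disjoint (disjoint_filter_filter hdisj)]
        have := hcard i
        omega
end

section
/- Let (G,c) be a t-coloured graph and T=(k_1,…,k_t), and let k_max = max_i k_i. If I is a set of isolated vertices of G such that for every colour-set X ⊆ [t] the set I contains min(k_max, |{w isolated : c(w)=X}|) isolated vertices with colour-set X, and v is an isolated vertex of G (deg(v)=0) with v ∉ I, then G has a T-fair vertex cover if and only if G − v has a T-fair vertex cover. -/
open Finset

/-- Isolated vertex rule: let `I` be a set of isolated vertices which, for each
colour-set `X`, contains at least `min k_max |{w isolated : c w = X}|` isolated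
vertices with colour-set `X` (`k_max = max_i k_i`).  If `v` is an isolated
vertex with `v ∉ I`, then `G` has a `T`-fair vertex cover iff `G - v` has one
(equivalently, `G` has a `T`-fair vertex cover avoiding `v`; `v` being
isolated, the edges are unchanged). -/
theorem stmt5 {V : Type*} [Fintype V] [DecidableEq V] (G : SimpleGraph V)
    [DecidableRel G.Adj]
    {t : ℕ} (c : V → Finset (Fin t)) (hc : ∀ w, (c w).Nonempty)
    (k : Fin t → ℕ) (kmax : ℕ)
    (hkmax : ∀ i, k i ≤ kmax) (hkmax' : ∃ i, k i = kmax)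
    (I : Finset V)
    (hIiso : ∀ w ∈ I, G.degree w = 0)
    (hIfull : ∀ X : Finset (Fin t),
      min kmax ((Finset.univ.filter (fun w => G.degree w = 0 ∧ c w = X)).card)
        ≤ (I.filter (fun w => c w = X)).card)
    (v : V) (hviso : G.degree v = 0) (hvI : v ∉ I) :
    (∃ S : Finset V,
        (∀ a b, G.Adj a b → a ∈ S ∨ b ∈ S) ∧
        (∀ i, (S.filter (fun w => i ∈ c w)).card = k i))
    ↔ (∃ S' : Finset V,
        v ∉ S' ∧
        (∀ a b, G.Adj a b → a ∈ S' ∨ b ∈ S') ∧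
        (∀ i, (S'.filter (fun w => i ∈ c w)).card = k i)) := by
  have hvnadj : ∀ a, ¬ G.Adj a v := by
    intro a h
    have hnb : G.neighborFinset v = ∅ := Finset.card_eq_zero.mp hviso
    have : a ∈ G.neighborFinset v := by
      rw [SimpleGraph.mem_neighborFinset]; exact h.symm
    simp [hnb] at this
  constructor
  · rintro ⟨S, hScov, hScnt⟩
    by_cases hvS : v ∈ S
    · obtain ⟨i, hiX⟩ := hc v
      set X := c v with hX
      -- S has at most kmax vertices of colour-set X
      have hScard : (S.filter (fun w => c w = X)).card ≤ kmax := by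
        calc (S.filter (fun w => c w = X)).card
            ≤ (S.filter (fun w => i ∈ c w)).card := by
              apply Finset.card_le_card
              intro w hw
              simp only [Finset.mem_filter] at *
              exact ⟨hw.1, hw.2 ▸ hiX⟩
          _ = k i := hScnt i
          _ ≤ kmax := hkmax i
      -- I contains at least kmax vertices of colour-set X
      have hIX : kmax ≤ (I.filter (fun w => c w = X)).card := by
        have hsub : I.filter (fun w => c w = X)
            ⊆ (Finset.univ.filter (fun w => G.degree w = 0 ∧ c w = X)).erase v := by
          intro w hw
          simp only [Finset.mem_filter, Finset.mem_erase, Finset.mem_univ,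
            true_and] at *
          exact ⟨fun h => hvI (h ▸ hw.1), hIiso w hw.1, hw.2⟩
        have hvmem : v ∈ Finset.univ.filter (fun w => G.degree w = 0 ∧ c w = X) := by
          simp [hviso, hX]
        have h1 : (I.filter (fun w => c w = X)).card
            ≤ (Finset.univ.filter (fun w => G.degree w = 0 ∧ c w = X)).card - 1 := by
          calc (I.filter (fun w => c w = X)).card
              ≤ ((Finset.univ.filter (fun w => G.degree w = 0 ∧ c w = X)).erase v).card :=
                Finset.card_le_card hsub
            _ = _ := Finset.card_erase_of_mem hvmem
        have h2 := hIfull X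
        have h3 : 1 ≤ (Finset.univ.filter (fun w => G.degree w = 0 ∧ c w = X)).card :=
          Finset.card_pos.mpr ⟨v, hvmem⟩
        omega
      -- find u ∈ I with colour-set X outside S
      have hvfil : v ∈ S.filter (fun w => c w = X) := by simp [hvS, hX]
      have hinter : ((I.filter (fun w => c w = X)) ∩ S).card ≤ kmax - 1 := by
        have hsub : (I.filter (fun w => c w = X)) ∩ S
            ⊆ (S.filter (fun w => c w = X)).erase v := by
          intro w hw
          simp only [Finset.mem_inter, Finset.mem_filter, Finset.mem_erase] at *
          exact ⟨fun h => hvI (h ▸ hw.1.1), hw.2, hw.1.2⟩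
        calc ((I.filter (fun w => c w = X)) ∩ S).card
            ≤ ((S.filter (fun w => c w = X)).erase v).card := Finset.card_le_card hsub
          _ = (S.filter (fun w => c w = X)).card - 1 := Finset.card_erase_of_mem hvfil
          _ ≤ kmax - 1 := by omega
      have hkmax1 : 1 ≤ kmax := by
        have h1 : 1 ≤ (S.filter (fun w => c w = X)).card :=
          Finset.card_pos.mpr ⟨v, hvfil⟩
        omega
      have hex : ((I.filter (fun w => c w = X)) \ S).Nonempty := by
        rw [← Finset.card_pos]
        have := Finset.card_inter_add_card_sdiff (I.filter (fun w => c w = X)) S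
        omega
      obtain ⟨u, hu⟩ := hex
      rw [Finset.mem_sdiff, Finset.mem_filter] at hu
      obtain ⟨⟨huI, hucX⟩, huS⟩ := hu
      have huv : u ≠ v := fun h => hvI (h ▸ huI)
      have huSe : u ∉ S.erase v := fun h => huS (Finset.mem_of_mem_erase h)
      refine ⟨insert u (S.erase v), ?_, ?_, ?_⟩
      · simp only [Finset.mem_insert, Finset.mem_erase]
        push_neg
        exact ⟨fun h => huv h.symm, fun h _ => h rfl⟩
      · intro a b hab
        rcases hScov a b hab with h | h
        · left
          have hav : a ≠ v := by rintro rfl; exact hvnadj b hab.symm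
          exact Finset.mem_insert_of_mem (Finset.mem_erase.mpr ⟨hav, h⟩)
        · right
          have hbv : b ≠ v := by rintro rfl; exact hvnadj a hab
          exact Finset.mem_insert_of_mem (Finset.mem_erase.mpr ⟨hbv, h⟩)
      · intro j
        rw [Finset.filter_insert, Finset.filter_erase]
        by_cases hjX : j ∈ X
        · have hjcu : j ∈ c u := hucX ▸ hjX
          rw [if_pos hjcu]
          have hvf : v ∈ S.filter (fun w => j ∈ c w) := by
            simp only [Finset.mem_filter]
            exact ⟨hvS, hjX⟩
          have hunotmem : u ∉ (S.filter (fun w => j ∈ c w)).erase v :=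
            fun h => huS (Finset.filter_subset _ _ (Finset.mem_of_mem_erase h))
          rw [Finset.card_insert_of_notMem hunotmem, Finset.card_erase_of_mem hvf,
            hScnt j]
          have : 1 ≤ k j := by
            have := Finset.card_pos.mpr ⟨v, hvf⟩
            rw [hScnt j] at this
            omega
          omega
        · have hjcu : j ∉ c u := hucX ▸ hjX
          rw [if_neg hjcu]
          have hvnf : v ∉ S.filter (fun w => j ∈ c w) := by
            simp only [Finset.mem_filter]
            exact fun h => hjX h.2
          rw [Finset.erase_eq_of_notMem hvnf, hScnt j]
    · exact ⟨S, hvS, hScov, hScnt⟩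
  · rintro ⟨S, _, hScov, hScnt⟩
    exact ⟨S, hScov, hScnt⟩
end

section
/- Let (G,c) be a t-coloured graph, T=(k_1,…,k_t), and v ∈ V(G) a vertex such that for some colour i*, the number of neighbours of v having colour i* exceeds k_{i*}. Then G has a T-fair vertex cover if and only if G − v has a (k'_1,…,k'_t)-fair vertex cover, where k'_i = k_i − 1 if i ∈ c(v) and k'_i = k_i otherwise. -/
open Finset

/-- Large neighbourhood rule: if `v` has more than `k_{i*}` neighbours of some
colour `i*`, then `G` has a `T`-fair vertex cover iff `G - v` has a
`(k'_i)`-fair vertex cover, where `k'_i = k_i - 1` if `i ∈ c(v)` and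
`k'_i = k_i` otherwise (expressed over `ℤ`). -/
theorem stmt6 {V : Type*} [Fintype V] [DecidableEq V] (G : SimpleGraph V)
    [DecidableRel G.Adj]
    {t : ℕ} (c : V → Finset (Fin t)) (hc : ∀ w, (c w).Nonempty)
    (k : Fin t → ℕ) (v : V)
    (h : ∃ istar : Fin t,
      k istar < ((G.neighborFinset v).filter (fun w => istar ∈ c w)).card) :
    (∃ S : Finset V,
        (∀ a b, G.Adj a b → a ∈ S ∨ b ∈ S) ∧
        (∀ i, (S.filter (fun w => i ∈ c w)).card = k i))
    ↔ (∃ S' : Finset V,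
        v ∉ S' ∧
        (∀ a b, G.Adj a b → a ≠ v → b ≠ v → a ∈ S' ∨ b ∈ S') ∧
        (∀ i, ((S'.filter (fun w => i ∈ c w)).card : ℤ)
          = (k i : ℤ) - (if i ∈ c v then 1 else 0))) := by
  constructor
  · rintro ⟨S, hcov, hcount⟩
    obtain ⟨istar, hstar⟩ := h
    have hvS : v ∈ S := by
      by_contra hv
      have hsub : (G.neighborFinset v).filter (fun w => istar ∈ c w)
          ⊆ S.filter (fun w => istar ∈ c w) := by
        intro w hw
        simp only [mem_filter, SimpleGraph.mem_neighborFinset] at hw ⊢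
        refine ⟨?_, hw.2⟩
        rcases hcov v w hw.1 with h1 | h2
        · exact absurd h1 hv
        · exact h2
      have := card_le_card hsub
      have := hcount istar
      omega
    refine ⟨S.erase v, notMem_erase _ _, fun a b hab _ _ => ?_, fun i => ?_⟩
    · rcases hcov a b hab with h1 | h2
      · exact Or.inl (mem_erase.mpr ⟨‹a ≠ v›, h1⟩)
      · exact Or.inr (mem_erase.mpr ⟨‹b ≠ v›, h2⟩)
    · have hfe : (S.erase v).filter (fun w => i ∈ c w)
          = (S.filter (fun w => i ∈ c w)).erase v := by
        ext w; simp [mem_filter, mem_erase]; tauto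
      rw [hfe]
      by_cases hiv : i ∈ c v
      · have hvmem : v ∈ S.filter (fun w => i ∈ c w) := mem_filter.mpr ⟨hvS, hiv⟩
        rw [card_erase_of_mem hvmem, hcount i]
        have : 1 ≤ k i := by
          have := card_pos.mpr ⟨v, hvmem⟩
          rw [hcount i] at this; omega
        simp [hiv]
        omega
      · have hvnmem : v ∉ S.filter (fun w => i ∈ c w) := by
          simp [mem_filter, hiv]
        rw [erase_eq_of_notMem hvnmem, hcount i]
        simp [hiv]
  · rintro ⟨S', hvS', hcov, hcount⟩
    refine ⟨insert v S', fun a b hab => ?_, fun i => ?_⟩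
    · by_cases ha : a = v
      · exact Or.inl (by simp [ha])
      by_cases hb : b = v
      · exact Or.inr (by simp [hb])
      rcases hcov a b hab ha hb with h1 | h2
      · exact Or.inl (mem_insert_of_mem h1)
      · exact Or.inr (mem_insert_of_mem h2)
    · have hz := hcount i
      by_cases hiv : i ∈ c v
      · have hfi : (insert v S').filter (fun w => i ∈ c w)
            = insert v (S'.filter (fun w => i ∈ c w)) := by
          ext w; by_cases hwv : w = v
          · subst hwv; simp [hiv]
          · simp [mem_filter, mem_insert, hwv]
        rw [hfi, card_insert_of_notMem (fun hm => hvS' (mem_filter.mp hm).1)]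
        rw [if_pos hiv] at hz
        omega
      · have hfi : (insert v S').filter (fun w => i ∈ c w)
            = S'.filter (fun w => i ∈ c w) := by
          ext w; by_cases hwv : w = v
          · subst hwv; simp [hiv, hvS']
          · simp [mem_filter, mem_insert, hwv]
        rw [hfi]
        rw [if_neg hiv] at hz
        omega
end

section
/- Let (G,c) be a t-coloured graph with t-tuple (k_1,…,k_t), and for each colour i let n_i = |{v ∈ V(G) : i ∈ c(v)}|. Construct G' by adding a new vertex v_0 adjacent to every vertex of G; let E_0 be the set of edges incident to v_0, and extend c to c' with c'(v_0) = [t]. Then G has a (k_1,…,k_t)-fair feedback vertex set if and only if there exist X ⊆ V(G') with v_0 ∈ X and X_0 ⊆ E_0 such that: (a) the subgraph H with vertex set X and edge set E_{G'}[X∖{v_0}] ∪ X_0 is connected, (b) |E_{G'}[X∖{v_0}] ∪ X_0| = |X| − 1, and (c) c'_i(X) = n_i − k_i + 1 for every i ∈ [t]. -/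
open Finset

variable {V : Type*}

/-- The graph `G'` obtained from `G` by adding an apex vertex `v₀` (here `none`)
adjacent to every vertex of `G`. -/
def addApex (G : SimpleGraph V) : SimpleGraph (Option V) where
  Adj a b := (a = none ∧ b ≠ none) ∨ (b = none ∧ a ≠ none) ∨
    (∃ u v : V, a = some u ∧ b = some v ∧ G.Adj u v)
  symm := by
    constructor
    rintro a b (⟨h1, h2⟩ | ⟨h1, h2⟩ | ⟨u, v, h1, h2, h3⟩)
    · exact Or.inr (Or.inl ⟨h1, h2⟩)
    · exact Or.inl ⟨h1, h2⟩
    · exact Or.inr (Or.inr ⟨v, u, h2, h1, h3.symm⟩)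
  loopless := by
    constructor
    rintro a (⟨h1, h2⟩ | ⟨h1, h2⟩ | ⟨u, v, h1, h2, h3⟩)
    · exact h2 h1
    · exact h2 h1
    · obtain rfl := Option.some.inj (h1.symm.trans h2)
      exact G.loopless.irrefl u h3

/-- Extension of the colouring `c` to `G'` assigning every colour to the apex. -/
def apexColour {t : ℕ} (c : V → Finset (Fin t)) : Option V → Finset (Fin t) :=
  fun a => a.elim Finset.univ c

/-- The subgraph of `G'` with vertex set `X` and edge set
`E_{G'}[X ∖ {v₀}] ∪ X₀`, where `X₀` (a set of neighbours of the apex) encodes a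
subset of the apex edges `E₀`. -/
def apexWitness (G : SimpleGraph V) (X : Finset (Option V)) (X₀ : Finset V)
    (hX₀ : ∀ v ∈ X₀, some v ∈ X) (hv0 : none ∈ X) : (addApex G).Subgraph where
  verts := ↑X
  Adj a b :=
    (∃ u v : V, a = some u ∧ b = some v ∧ G.Adj u v ∧ some u ∈ X ∧ some v ∈ X) ∨
    (a = none ∧ ∃ v ∈ X₀, b = some v) ∨
    (b = none ∧ ∃ v ∈ X₀, a = some v)
  adj_sub := by
    rintro a b (⟨u, v, h1, h2, h3, _, _⟩ | ⟨h1, v, _, h2⟩ | ⟨h1, v, _, h2⟩)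
    · exact Or.inr (Or.inr ⟨u, v, h1, h2, h3⟩)
    · exact Or.inl ⟨h1, by simp [h2]⟩
    · exact Or.inr (Or.inl ⟨h1, by simp [h2]⟩)
  edge_vert := by
    rintro a b (⟨u, v, h1, h2, h3, h4, h5⟩ | ⟨h1, v, hv, h2⟩ | ⟨h1, v, hv, h2⟩)
    · exact Finset.mem_coe.mpr (h1 ▸ h4)
    · exact Finset.mem_coe.mpr (h1 ▸ hv0)
    · exact Finset.mem_coe.mpr (h2 ▸ hX₀ v hv)
  symm := by
    constructor
    rintro a b (⟨u, v, h1, h2, h3, h4, h5⟩ | ⟨h1, v, hv, h2⟩ | ⟨h1, v, hv, h2⟩)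
    · exact Or.inl ⟨v, u, h2, h1, h3.symm, h5, h4⟩
    · exact Or.inr (Or.inr ⟨h1, v, hv, h2⟩)
    · exact Or.inr (Or.inl ⟨h1, v, hv, h2⟩)

open SimpleGraph
set_option linter.unusedSectionVars false

section Base
variable {W : Type*}

lemma conn_card_le [Fintype W] [DecidableEq W] {K : SimpleGraph W} [Fintype K.edgeSet]
    (hK : K.Connected) : Fintype.card W ≤ K.edgeFinset.card + 1 := by
  classical
  obtain ⟨v₀⟩ := hK.nonempty
  have hex : ∀ w, ∃ p : K.Walk w v₀, p.length = K.dist w v₀ := fun w =>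
    (hK w v₀).exists_walk_length_eq_dist
  choose p hp using hex
  have hnn : ∀ w, w ≠ v₀ → ¬ (p w).Nil := fun w hw => SimpleGraph.Walk.not_nil_of_ne hw
  have key : ∀ w, w ≠ v₀ → K.dist ((p w).getVert 1) v₀ + 1 ≤ K.dist w v₀ := by
    intro w hw
    have h1 : K.dist ((p w).getVert 1) v₀ ≤ ((p w).tail).length := K.dist_le _
    have h2 : ((p w).tail).length + 1 = (p w).length := Walk.length_tail_add_one (hnn w hw)
    have h3 := hp w
    have h4 := hp ((p w).getVert 1)
    omega
  have hinj : Set.InjOn (fun w => if h : w = v₀ then s(v₀, v₀) else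
      ((p w).firstDart (hnn w h)).edge) ↑(univ.erase v₀) := by
    intro a ha b hb hab
    simp only [coe_erase, Set.mem_diff, Set.mem_singleton_iff] at ha hb
    dsimp only at hab
    rw [dif_neg ha.2, dif_neg hb.2] at hab
    rw [Walk.edge_firstDart, Walk.edge_firstDart, Sym2.eq_iff] at hab
    rcases hab with ⟨h1, _⟩ | ⟨h1, h2⟩
    · exact h1
    · exfalso
      have k1 := key a ha.2
      have k2 := key b hb.2
      change a = (p b).getVert 1 at h1; change (p a).getVert 1 = b at h2
      rw [← h1] at k2; rw [h2] at k1
      omega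
  have hmaps : ∀ w ∈ univ.erase v₀, (if h : w = v₀ then s(v₀, v₀) else
      ((p w).firstDart (hnn w h)).edge) ∈ K.edgeFinset := by
    intro w hw
    rw [dif_neg (Finset.ne_of_mem_erase hw)]
    rw [mem_edgeFinset]
    exact Dart.edge_mem _
  have := Finset.card_le_card_of_injOn _ hmaps (by simpa using hinj)
  simp only [Finset.card_erase_of_mem (mem_univ _), Finset.card_univ] at this
  omega

lemma connected_deleteEdge {K : SimpleGraph W} {x y : W}
    (hxy : (K.deleteEdges {s(x,y)}).Reachable x y) (hK : K.Connected) :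
    (K.deleteEdges {s(x,y)}).Connected := by
  rw [connected_iff]
  refine ⟨?_, hK.nonempty⟩
  have step : ∀ a b : W, K.Adj a b → (K.deleteEdges {s(x,y)}).Reachable a b := by
    intro a b hab
    by_cases he : s(a,b) = s(x,y)
    · rw [Sym2.eq_iff] at he
      rcases he with ⟨rfl, rfl⟩ | ⟨rfl, rfl⟩
      · exact hxy
      · exact hxy.symm
    · exact (SimpleGraph.deleteEdges_adj.mpr ⟨hab, by simp [he]⟩).reachable
  intro a b
  obtain ⟨w⟩ := hK a b
  induction w with
  | nil => rfl
  | cons h q ih => exact (step _ _ h).trans ih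

lemma acyclic_of_conn_card [Fintype W] [DecidableEq W] {K : SimpleGraph W} [Fintype K.edgeSet]
    (hK : K.Connected) (hcard : K.edgeFinset.card + 1 = Fintype.card W) : K.IsAcyclic := by
  classical
  intro v cyc hcyc
  obtain ⟨x, y, hadj, he⟩ : ∃ x y, K.Adj x y ∧ s(x,y) ∈ cyc.edges := by
    cases cyc with
    | nil => exact absurd rfl hcyc.ne_nil
    | cons h q => exact ⟨_, _, h, by simp⟩
  have hnb : ¬ K.IsBridge s(x,y) := by
    rw [isBridge_iff_adj_and_forall_cycle_notMem]
    push_neg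
    exact ⟨_, cyc, hcyc, he⟩
    exact hadj
  rw [isBridge_iff] at hnb
  push_neg at hnb
  have hreach := hnb
  have hconn' : (K.deleteEdges {s(x,y)}).Connected :=
    connected_deleteEdge (by rwa [SimpleGraph.deleteEdges]) hK
  have hle := conn_card_le hconn'
  have hcount : (K.deleteEdges {s(x,y)}).edgeFinset.card + 1 = K.edgeFinset.card := by
    have : (K.deleteEdges {s(x,y)}).edgeSet = K.edgeSet \ {s(x,y)} := edgeSet_deleteEdges _
    rw [edgeFinset, edgeFinset]
    rw [Set.toFinset_congr this, Set.toFinset_diff]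
    rw [Finset.card_sdiff_of_subset (by simp [hadj])]
    simp only [Set.toFinset_singleton, Finset.card_singleton]
    have : s(x,y) ∈ K.edgeSet.toFinset := by simp [hadj]
    have h1 : 1 ≤ K.edgeSet.toFinset.card := Finset.card_pos.mpr ⟨_, this⟩
    omega
  omega

end Base

section Helpers

variable [Fintype V] [DecidableEq V] {G : SimpleGraph V} {X : Finset (Option V)} {X₀ : Finset V}
  {hX₀ : ∀ v ∈ X₀, some v ∈ X} {hv0 : none ∈ X}

lemma wadj_some_some {u v : V} :
    (apexWitness G X X₀ hX₀ hv0).Adj (some u) (some v) ↔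
      G.Adj u v ∧ some u ∈ X ∧ some v ∈ X := by
  constructor
  · rintro (⟨a, b, ha, hb, h, h1, h2⟩ | ⟨h, _⟩ | ⟨h, _⟩)
    · obtain rfl := Option.some.inj ha
      obtain rfl := Option.some.inj hb
      exact ⟨h, h1, h2⟩
    · exact absurd h (by simp)
    · exact absurd h (by simp)
  · rintro ⟨h, h1, h2⟩
    exact Or.inl ⟨u, v, rfl, rfl, h, h1, h2⟩

lemma wadj_none_some {v : V} :
    (apexWitness G X X₀ hX₀ hv0).Adj none (some v) ↔ v ∈ X₀ := by
  constructor
  · rintro (⟨a, b, ha, _⟩ | ⟨_, w, hw, h⟩ | ⟨h, _⟩)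
    · exact absurd ha (by simp)
    · obtain rfl := Option.some.inj h
      exact hw
    · exact absurd h (by simp)
  · intro h
    exact Or.inr (Or.inl ⟨rfl, v, h, rfl⟩)

lemma downWalk : ∀ {a b : Option V} (p : (addApex G).Walk a b)
    (_ : ∀ e ∈ p.edges, e ∈ (apexWitness G X X₀ hX₀ hv0).edgeSet)
    (_ : none ∉ p.support) {u v : V} (_ : a = some u) (_ : b = some v)
    (hu : some u ∈ X) (hv : some v ∈ X),
    ∃ q : (G.induce {x : V | some x ∈ X}).Walk ⟨u, hu⟩ ⟨v, hv⟩,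
      q.support.map (fun z => some z.1) = p.support ∧
      q.edges.map (Sym2.map (fun z => some z.1)) = p.edges := by
  intro a b p
  induction p with
  | nil =>
    intro he hns u v ha hb hu hv
    subst ha
    obtain rfl := Option.some.inj hb
    exact ⟨Walk.nil, by simp, by simp⟩
  | @cons a m b hadj p ih =>
    intro he hns u v ha hb hu hv
    subst ha
    have hmn : m ≠ none := by
      rintro rfl
      refine hns ?_
      rw [Walk.support_cons]
      exact List.mem_cons_of_mem _ p.start_mem_support
    obtain ⟨w, rfl⟩ := Option.ne_none_iff_exists'.mp hmn
    have hedge : (apexWitness G X X₀ hX₀ hv0).Adj (some u) (some w) := by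
      have := he s(some u, some w) (by simp)
      exact this
    rw [wadj_some_some] at hedge
    obtain ⟨hGadj, hu', hw'⟩ := hedge
    have hns' : none ∉ p.support := fun h => hns (by simp [Walk.support_cons, h])
    obtain ⟨q, hq1, hq2⟩ := ih (fun e heq => he e (by simp [heq])) hns' rfl hb hw' hv
    refine ⟨Walk.cons (induce_adj.mpr hGadj : (G.induce {x : V | some x ∈ X}).Adj ⟨u, hu⟩ ⟨w, hw'⟩) q,
      ?_, ?_⟩
    · rw [Walk.support_cons, Walk.support_cons, List.map_cons, hq1]
    · rw [Walk.edges_cons, Walk.edges_cons, List.map_cons, hq2, Sym2.map_pair_eq]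

lemma no_cycle_at_none
    (hrep : ∀ u w (hu : some u ∈ X) (hw : some w ∈ X), u ∈ X₀ → w ∈ X₀ →
      (G.induce {x : V | some x ∈ X}).Reachable ⟨u, hu⟩ ⟨w, hw⟩ → u = w)
    (c : (addApex G).Walk none none) (hc : c.IsCycle)
    (he : ∀ e ∈ c.edges, e ∈ (apexWitness G X X₀ hX₀ hv0).edgeSet) : False := by
  cases c with
  | nil => exact hc.not_of_nil
  | @cons _ m _ hadj p =>
    obtain ⟨u, rfl⟩ := Option.ne_none_iff_exists'.mp hadj.ne.symm
    have hu₀ : u ∈ X₀ := by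
      have h := he s(none, some u) (by rw [Walk.edges_cons]; exact List.mem_cons_self)
      rw [Subgraph.mem_edgeSet] at h
      exact wadj_none_some.mp h
    cases hrev : p.reverse with
    | @cons _ m' _ hadj' q =>
      obtain ⟨w, rfl⟩ := Option.ne_none_iff_exists'.mp hadj'.ne.symm
      have h2 : s(none, some w) ∈ p.edges := by
        have h1 : s(none, some w) ∈ p.reverse.edges := by
          rw [hrev, Walk.edges_cons]; exact List.mem_cons_self
        rwa [Walk.edges_reverse, List.mem_reverse] at h1
      have hw₀ : w ∈ X₀ := by
        have h := he s(none, some w)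
          (by rw [Walk.edges_cons]; exact List.mem_cons_of_mem _ h2)
        rw [Subgraph.mem_edgeSet] at h
        exact wadj_none_some.mp h
      have hne : u ≠ w := by
        rintro rfl
        have hnd := hc.isTrail.edges_nodup
        rw [Walk.edges_cons] at hnd
        exact (List.nodup_cons.mp hnd).1 h2
      have hpnd : p.support.Nodup := by
        have := hc.support_nodup
        rwa [Walk.support_cons, List.tail_cons] at this
      have hsup : none ∉ q.support := by
        have hrevsup : p.support.reverse = none :: q.support := by
          rw [← Walk.support_reverse, hrev, Walk.support_cons]
        have : p.support.reverse.Nodup := List.nodup_reverse.mpr hpnd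
        rw [hrevsup] at this
        exact (List.nodup_cons.mp this).1
      have heq' : ∀ e ∈ q.edges, e ∈ (apexWitness G X X₀ hX₀ hv0).edgeSet := by
        intro e heq
        have h1 : e ∈ p.reverse.edges := by
          rw [hrev, Walk.edges_cons]; exact List.mem_cons_of_mem _ heq
        rw [Walk.edges_reverse, List.mem_reverse] at h1
        exact he e (by rw [Walk.edges_cons]; exact List.mem_cons_of_mem _ h1)
      obtain ⟨qq, -, -⟩ := downWalk q heq' hsup rfl rfl (hX₀ w hw₀) (hX₀ u hu₀)
      exact hne (hrep w u (hX₀ w hw₀) (hX₀ u hu₀) hw₀ hu₀ ⟨qq⟩).symm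

lemma witness_acyclic
    (hForest : (G.induce {x : V | some x ∈ X}).IsAcyclic)
    (hrep : ∀ u w (hu : some u ∈ X) (hw : some w ∈ X), u ∈ X₀ → w ∈ X₀ →
      (G.induce {x : V | some x ∈ X}).Reachable ⟨u, hu⟩ ⟨w, hw⟩ → u = w) :
    (apexWitness G X X₀ hX₀ hv0).coe.IsAcyclic := by
  intro z cyc hcyc
  have hC : (cyc.map (apexWitness G X X₀ hX₀ hv0).hom).IsCycle :=
    hcyc.map Subgraph.hom_injective
  have hedges : ∀ e ∈ (cyc.map (apexWitness G X X₀ hX₀ hv0).hom).edges,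
      e ∈ (apexWitness G X X₀ hX₀ hv0).edgeSet := by
    intro e hee
    rw [Walk.edges_map] at hee
    obtain ⟨e', he', rfl⟩ := List.mem_map.mp hee
    have h1 : e' ∈ (apexWitness G X X₀ hX₀ hv0).coe.edgeSet := cyc.edges_subset_edgeSet he'
    rw [← Subgraph.image_coe_edgeSet_coe]
    exact ⟨e', h1, rfl⟩
  by_cases hn : none ∈ (cyc.map (apexWitness G X X₀ hX₀ hv0).hom).support
  · exact no_cycle_at_none hrep _ ((hC.rotate hn)) (fun e hee =>
      hedges e (((cyc.map (apexWitness G X X₀ hX₀ hv0).hom).rotate_edges _ hn).perm.mem_iff.mp hee))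
  · have hst : ((z : Option V)) ∈ (cyc.map (apexWitness G X X₀ hX₀ hv0).hom).support :=
      Walk.start_mem_support _
    obtain ⟨a, ha⟩ : ∃ a : V, (z : Option V) = some a := by
      cases hz : (z : Option V) with
      | none => exact absurd (hz ▸ hst) hn
      | some a => exact ⟨a, rfl⟩
    have haX : some a ∈ X := by
      have := z.2
      rw [ha] at this
      exact Finset.mem_coe.mp this
    obtain ⟨qq, hs, hed⟩ := downWalk (cyc.map (apexWitness G X X₀ hX₀ hv0).hom) hedges hn
      (by exact ha) (by exact ha) haX haX
    refine hForest qq ⟨⟨⟨?_⟩, ?_⟩, ?_⟩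
    · exact List.Nodup.of_map _ (hed ▸ hC.isTrail.edges_nodup)
    · intro hnil
      have h1 := congrArg List.length hs
      rw [hnil] at h1
      simp only [Walk.support_nil, List.length_map, List.length_cons, List.length_nil,
        Walk.length_support] at h1
      exact hC.not_nil (Walk.nil_iff_length_eq.mpr (by omega))
    · have : qq.support.tail.map (fun z => some z.1) =
          (cyc.map (apexWitness G X X₀ hX₀ hv0).hom).support.tail := by
        rw [← hs, List.map_tail]
      exact List.Nodup.of_map _ (this ▸ hC.support_nodup)

/-- The embedding of the induced forest into the witness subgraph's coe. -/
def upHom (G : SimpleGraph V) (X : Finset (Option V)) (X₀ : Finset V)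
    (hX₀ : ∀ v ∈ X₀, some v ∈ X) (hv0 : none ∈ X) :
    (G.induce {x : V | some x ∈ X}) →g (apexWitness G X X₀ hX₀ hv0).coe where
  toFun y := ⟨some y.1, Finset.mem_coe.mpr y.2⟩
  map_rel' := by
    intro a b hab
    rw [Subgraph.coe_adj]
    exact wadj_some_some.mpr ⟨hab, a.2, b.2⟩

lemma upHom_injective : Function.Injective (upHom G X X₀ hX₀ hv0) := by
  intro a b h
  exact Subtype.ext (Option.some.inj (congrArg Subtype.val h))

lemma witness_connected
    (hcov : ∀ u : V, ∀ hu : some u ∈ X, ∃ r, ∃ hr : some r ∈ X, r ∈ X₀ ∧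
      (G.induce {x : V | some x ∈ X}).Reachable ⟨u, hu⟩ ⟨r, hr⟩) :
    (apexWitness G X X₀ hX₀ hv0).Connected := by
  rw [Subgraph.connected_iff]
  refine ⟨?_, ⟨none, Finset.mem_coe.mpr hv0⟩⟩
  rw [Subgraph.preconnected_iff]
  have hapex : ∀ z : ↥(apexWitness G X X₀ hX₀ hv0).verts,
      (apexWitness G X X₀ hX₀ hv0).coe.Reachable z ⟨none, Finset.mem_coe.mpr hv0⟩ := by
    rintro ⟨a, haa⟩
    cases a with
    | none => exact Reachable.refl _
    | some u =>
      have hu : some u ∈ X := Finset.mem_coe.mp haa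
      obtain ⟨r, hr, hr₀, hreach⟩ := hcov u hu
      have hup : (apexWitness G X X₀ hX₀ hv0).coe.Reachable ⟨some u, haa⟩
          ⟨some r, Finset.mem_coe.mpr hr⟩ := by
        obtain ⟨q⟩ := hreach
        exact ⟨q.map (upHom G X X₀ hX₀ hv0)⟩
      refine hup.trans ?_
      have hadj : (apexWitness G X X₀ hX₀ hv0).coe.Adj
          ⟨some r, Finset.mem_coe.mpr hr⟩ ⟨none, Finset.mem_coe.mpr hv0⟩ := by
        rw [Subgraph.coe_adj]
        exact (wadj_none_some.mpr hr₀).symm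
      exact hadj.reachable
  intro z₁ z₂
  exact (hapex z₁).trans (hapex z₂).symm

lemma colour_count {t : ℕ} (h0 : none ∈ X) (c : V → Finset (Fin t)) (i : Fin t) :
    (X.filter (fun a => i ∈ apexColour c a)).card
      = ((univ.filter (fun v : V => some v ∈ X)).filter (fun v => i ∈ c v)).card + 1 := by
  have hXY : X = insert none ((univ.filter (fun v : V => some v ∈ X)).image some) := by
    ext a
    cases a with
    | none => simpa using h0
    | some v => simp
  conv_lhs => rw [hXY]
  rw [Finset.filter_insert, if_pos (by simp [apexColour])]
  rw [Finset.card_insert_of_notMem (by simp)]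
  have himg : ((univ.filter (fun v : V => some v ∈ X)).image some).filter
      (fun a => i ∈ apexColour c a)
      = (((univ.filter (fun v : V => some v ∈ X)).filter (fun v => i ∈ c v)).image some) := by
    ext a
    simp only [Finset.mem_filter, Finset.mem_image]
    constructor
    · rintro ⟨⟨v, hv, rfl⟩, hi⟩
      exact ⟨v, ⟨hv, by simpa [apexColour] using hi⟩, rfl⟩
    · rintro ⟨v, ⟨hv, hi⟩, rfl⟩
      exact ⟨⟨v, hv, rfl⟩, by simpa [apexColour] using hi⟩
  rw [himg, Finset.card_image_of_injective _ (Option.some_injective V)]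

end Helpers

/-- `G` has a `(k_i)`-fair feedback vertex set iff in `G'` (the apex extension)
there are `X ∋ v₀` and `X₀ ⊆ E₀` such that the subgraph with vertex set `X` and
edge set `E_{G'}[X∖{v₀}] ∪ X₀` is connected, has `|X| - 1` edges, and
`c'_i(X) = n_i - k_i + 1` for every colour `i`. -/
theorem stmt10 [Fintype V] [DecidableEq V] (G : SimpleGraph V)
    {t : ℕ} (c : V → Finset (Fin t)) (hc : ∀ w, (c w).Nonempty)
    (k n : Fin t → ℕ)
    (hn : ∀ i, n i = (Finset.univ.filter (fun v => i ∈ c v)).card) :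
    (∃ F : Finset V,
        (G.induce {v : V | v ∉ F}).IsAcyclic ∧
        ∀ i, (F.filter (fun w => i ∈ c w)).card = k i)
    ↔ (∃ (X : Finset (Option V)) (X₀ : Finset V) (hv0 : none ∈ X)
          (hX₀ : ∀ v ∈ X₀, some v ∈ X),
        (apexWitness G X X₀ hX₀ hv0).Connected ∧
        (apexWitness G X X₀ hX₀ hv0).edgeSet.ncard + 1 = X.card ∧
        ∀ i, ((X.filter (fun a => i ∈ apexColour c a)).card : ℤ)
          = (n i : ℤ) - (k i : ℤ) + 1) := by
  classical
  have hsplit : ∀ (X : Finset (Option V)) (i : Fin t),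
      ((univ.filter (fun v : V => some v ∉ X)).filter (fun v => i ∈ c v)).card
        + ((univ.filter (fun v : V => some v ∈ X)).filter (fun v => i ∈ c v)).card = n i := by
    intro X i
    rw [hn i, ← Finset.card_union_of_disjoint (by
      rw [Finset.disjoint_left]
      intro a ha hb
      simp only [Finset.mem_filter, Finset.mem_univ, true_and] at ha hb
      exact ha.1 hb.1)]
    congr 1
    ext v
    simp only [Finset.mem_union, Finset.mem_filter, Finset.mem_univ, true_and]
    tauto
  have hedgecard : ∀ (X : Finset (Option V)) (X₀ : Finset V)
      (hX₀ : ∀ v ∈ X₀, some v ∈ X) (hv0 : none ∈ X),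
      ∀ _ : Fintype ↥((apexWitness G X X₀ hX₀ hv0).coe.edgeSet),
      (apexWitness G X X₀ hX₀ hv0).edgeSet.ncard
        = (apexWitness G X X₀ hX₀ hv0).coe.edgeFinset.card := by
    intro X X₀ hX₀ hv0 inst
    rw [← Subgraph.image_coe_edgeSet_coe,
      Set.ncard_image_of_injective _ (Sym2.map.injective Subtype.val_injective),
      SimpleGraph.edgeFinset_card, ← Nat.card_eq_fintype_card, ← Nat.card_coe_set_eq]
  have hvertcard : ∀ (X : Finset (Option V)) (X₀ : Finset V)
      (hX₀ : ∀ v ∈ X₀, some v ∈ X) (hv0 : none ∈ X),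
      Fintype.card ↥(apexWitness G X X₀ hX₀ hv0).verts = X.card := by
    intro X X₀ hX₀ hv0
    rw [← Nat.card_eq_fintype_card]
    have hv : (apexWitness G X X₀ hX₀ hv0).verts = (↑X : Set (Option V)) := rfl
    rw [hv, Nat.card_coe_set_eq, Set.ncard_coe_finset]
  constructor
  · rintro ⟨F, hac, hcol⟩
    set X : Finset (Option V) := insert none ((univ.filter (fun v => v ∉ F)).image some)
      with hXdef
    have hv0 : none ∈ X := Finset.mem_insert_self _ _
    have hmem : ∀ v : V, some v ∈ X ↔ v ∉ F := by
      intro v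
      simp [hXdef]
    have hset : {x : V | some x ∈ X} = {v : V | v ∉ F} := by
      ext v
      simp [hmem]
    have hFor : (G.induce {x : V | some x ∈ X}).IsAcyclic := by
      rw [hset]; exact hac
    letI : Fintype ↥{x : V | some x ∈ X} := Fintype.ofFinite _
    set I := G.induce {x : V | some x ∈ X} with hI
    have key : ∀ C : I.ConnectedComponent, I.connectedComponentMk C.out = C :=
      fun C => C.out_eq
    set X₀ : Finset V := Finset.image
      (fun y : ↥{x : V | some x ∈ X} => ((I.connectedComponentMk y).out : V))
      Finset.univ with hX₀def
    have hX₀ : ∀ v ∈ X₀, some v ∈ X := by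
      intro v hv
      obtain ⟨y, -, hy⟩ := Finset.mem_image.mp hv
      rw [← hy]
      exact ((I.connectedComponentMk y).out).2
    have hrep : ∀ u w (hu : some u ∈ X) (hw : some w ∈ X), u ∈ X₀ → w ∈ X₀ →
        I.Reachable ⟨u, hu⟩ ⟨w, hw⟩ → u = w := by
      intro u w hu hw hu₀ hw₀ hre
      obtain ⟨a, -, ha⟩ := Finset.mem_image.mp hu₀
      obtain ⟨b, -, hb⟩ := Finset.mem_image.mp hw₀
      have h1 : (⟨u, hu⟩ : ↥{x : V | some x ∈ X}) = (I.connectedComponentMk a).out :=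
        Subtype.ext ha.symm
      have h2 : (⟨w, hw⟩ : ↥{x : V | some x ∈ X}) = (I.connectedComponentMk b).out :=
        Subtype.ext hb.symm
      have h3 : I.connectedComponentMk a = I.connectedComponentMk b := by
        have hs := ConnectedComponent.sound hre
        rw [h1, h2] at hs
        rwa [key (I.connectedComponentMk a), key (I.connectedComponentMk b)] at hs
      rw [← ha, ← hb, h3]
    have hcov : ∀ u : V, ∀ hu : some u ∈ X, ∃ r, ∃ hr : some r ∈ X, r ∈ X₀ ∧
        I.Reachable ⟨u, hu⟩ ⟨r, hr⟩ := by
      intro u hu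
      refine ⟨((I.connectedComponentMk ⟨u, hu⟩).out : V),
        ((I.connectedComponentMk ⟨u, hu⟩).out).2,
        Finset.mem_image.mpr ⟨⟨u, hu⟩, Finset.mem_univ _, rfl⟩, ?_⟩
      have h4 : I.connectedComponentMk ⟨u, hu⟩
          = I.connectedComponentMk ((I.connectedComponentMk ⟨u, hu⟩).out) :=
        (key _).symm
      exact ConnectedComponent.exact h4
    have hconn := witness_connected (hX₀ := hX₀) (hv0 := hv0) hcov
    have hacy := witness_acyclic (hX₀ := hX₀) (hv0 := hv0) hFor hrep
    refine ⟨X, X₀, hv0, hX₀, hconn, ?_, ?_⟩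
    · have htree : (apexWitness G X X₀ hX₀ hv0).coe.IsTree := ⟨hconn.coe, hacy⟩
      letI : Fintype ↥((apexWitness G X X₀ hX₀ hv0).coe.edgeSet) := Fintype.ofFinite _
      have hcard := htree.card_edgeFinset
      rw [hedgecard X X₀ hX₀ hv0 _, ← hvertcard X X₀ hX₀ hv0]
      exact hcard
    · intro i
      have h5 := colour_count (X := X) hv0 c i
      have h6 := hsplit X i
      have h7 : (F.filter (fun w => i ∈ c w)).card
          = ((univ.filter (fun v : V => some v ∉ X)).filter (fun v => i ∈ c v)).card := by
        congr 1
        ext v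
        simp only [Finset.mem_filter, Finset.mem_univ, true_and]
        constructor
        · intro ⟨hv, hi⟩
          exact ⟨fun hs => (hmem v).mp hs hv, hi⟩
        · intro ⟨hv, hi⟩
          refine ⟨?_, hi⟩
          by_contra hvF
          exact hv ((hmem v).mpr hvF)
      have h8 := hcol i
      rw [h5]
      rw [h7] at h8
      omega
  · rintro ⟨X, X₀, hv0, hX₀, hconn, hcount, hcolour⟩
    refine ⟨univ.filter (fun v => some v ∉ X), ?_, ?_⟩
    · have hsets : {v : V | v ∉ univ.filter (fun v : V => some v ∉ X)}
          = {x : V | some x ∈ X} := by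
        ext v
        simp
      rw [hsets]
      letI : Fintype ↥((apexWitness G X X₀ hX₀ hv0).coe.edgeSet) := Fintype.ofFinite _
      have hcardcoe : (apexWitness G X X₀ hX₀ hv0).coe.edgeFinset.card + 1
          = Fintype.card ↥(apexWitness G X X₀ hX₀ hv0).verts := by
        rw [← hedgecard X X₀ hX₀ hv0 _, hvertcard X X₀ hX₀ hv0]
        exact hcount
      have hacoe := acyclic_of_conn_card hconn.coe hcardcoe
      intro y qq hqq
      exact hacoe ((qq.map (upHom G X X₀ hX₀ hv0)))
        (hqq.map (upHom_injective (hX₀ := hX₀) (hv0 := hv0)))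
    · intro i
      have h5 := colour_count (X := X) hv0 c i
      have h6 := hsplit X i
      have h8 := hcolour i
      rw [h5] at h8
      have h7 : (univ.filter (fun v : V => some v ∉ X)).filter (fun w => i ∈ c w)
          = (univ.filter (fun v : V => some v ∉ X)).filter (fun v => i ∈ c v) := rfl
      rw [h7]
      omega
end

section
/- There exists a function that, given a family of partitions 𝒜 ⊆ Π(U) of a finite set U, outputs a subfamily 𝒜' ⊆ 𝒜 with |𝒜'| ≤ 2^{|U|−1} such that for every p ∈ 𝒜 and every q ∈ Π(U) with p ⊔ q = {U} (the partition with one block), there exists p' ∈ 𝒜' with p' ⊔ q = {U}. -/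
open scoped Classical

namespace Stmt13Aux

variable {U : Type*} [Fintype U]

noncomputable def extb (u0 : U) (g : {x : U // x ≠ u0} → Bool) : U → Bool :=
  fun x => if h : x = u0 then true else g ⟨x, h⟩

noncomputable def vec (u0 : U) (p : Setoid U) : ({x : U // x ≠ u0} → Bool) → ZMod 2 :=
  fun g => if p ≤ Setoid.ker (extb u0 g) then 1 else 0

lemma extb_u0 (u0 : U) (g : {x : U // x ≠ u0} → Bool) : extb u0 g u0 = true := by
  simp [extb]

lemma extb_ne (u0 : U) (g : {x : U // x ≠ u0} → Bool) {x : U} (h : x ≠ u0) :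
    extb u0 g x = g ⟨x, h⟩ := by
  simp [extb, h]

lemma innersum (u0 : U) (p q : Setoid U) :
    ∑ g : {x : U // x ≠ u0} → Bool, vec u0 p g * vec u0 q g
      = if p ⊔ q = ⊤ then 1 else 0 := by
  have hmul : ∀ g, vec u0 p g * vec u0 q g
      = if p ⊔ q ≤ Setoid.ker (extb u0 g) then 1 else 0 := by
    intro g
    unfold vec
    by_cases hp : p ≤ Setoid.ker (extb u0 g) <;>
      by_cases hq : q ≤ Setoid.ker (extb u0 g) <;>
      simp [hp, hq, sup_le_iff]
  rw [Finset.sum_congr rfl fun g _ => hmul g]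
  generalize p ⊔ q = r
  by_cases htop : r = ⊤
  · subst htop
    -- condition holds iff g is constantly true
    have hiff : ∀ g : {x : U // x ≠ u0} → Bool,
        ((⊤ : Setoid U) ≤ Setoid.ker (extb u0 g)) ↔ g = fun _ => true := by
      intro g
      constructor
      · intro h
        funext x
        have h2 : (Setoid.ker (extb u0 g)) x u0 := h trivial
        rw [Setoid.ker_def] at h2
        rw [extb_ne u0 g x.2, extb_u0] at h2
        simpa using h2
      · rintro rfl
        intro a b _
        rw [Setoid.ker_def]
        by_cases ha : a = u0 <;> by_cases hb : b = u0 <;>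
          simp [extb, ha, hb]
    rw [Finset.sum_congr rfl fun g _ => by rw [if_congr (hiff g) rfl rfl]]
    rw [Finset.sum_ite_eq' Finset.univ (fun _ => true) (fun _ => 1)]
    simp
  · -- r ≠ ⊤ : find x not related to u0, flip involution, sum is 0
    have hx : ∃ x, ¬ r x u0 := by
      by_contra h
      push_neg at h
      exact htop (Setoid.eq_top_iff.mpr fun a b =>
        r.trans (h a) (r.symm (h b)))
    obtain ⟨x, hx⟩ := hx
    have hxu0 : x ≠ u0 := fun h => hx (h ▸ r.refl u0)
    have hu0x : ¬ r u0 x := fun h => hx (r.symm h)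
    set σ : ({y : U // y ≠ u0} → Bool) → ({y : U // y ≠ u0} → Bool) :=
      fun g y => if r (↑y) x then !(g y) else g y with hσ
    have hσσ : ∀ g, σ (σ g) = g := by
      intro g; funext y
      by_cases h : r (↑y) x <;> simp [hσ, h]
    have hext : ∀ g (y : U), extb u0 (σ g) y
        = if r y x then !(extb u0 g y) else extb u0 g y := by
      intro g y
      by_cases hy : y = u0
      · subst hy; simp [extb_u0, hu0x]
      · rw [extb_ne u0 _ hy, extb_ne u0 g hy]
    have hpres : ∀ g, r ≤ Setoid.ker (extb u0 g) → r ≤ Setoid.ker (extb u0 (σ g)) := by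
      intro g h a b hab
      rw [Setoid.ker_def, hext g a, hext g b]
      have h1 : extb u0 g a = extb u0 g b := (Setoid.ker_def).mp (h hab)
      have h2 : r a x ↔ r b x := ⟨fun h' => r.trans (r.symm hab) h',
        fun h' => r.trans hab h'⟩
      by_cases hax : r a x
      · rw [if_pos hax, if_pos (h2.mp hax), h1]
      · rw [if_neg hax, if_neg (fun h' => hax (h2.mpr h')), h1]
    have hcond : ∀ g, (r ≤ Setoid.ker (extb u0 (σ g))) ↔ (r ≤ Setoid.ker (extb u0 g)) := by
      intro g
      exact ⟨fun h => hσσ g ▸ hpres (σ g) h, hpres g⟩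
    have hne : ∀ g, σ g ≠ g := by
      intro g h
      have := congrFun h ⟨x, hxu0⟩
      simp [hσ] at this
    rw [if_neg htop]
    refine Finset.sum_involution (fun g _ => σ g) ?_ (fun g _ _ => hne g)
      (fun g _ => Finset.mem_univ _) (fun g _ => hσσ g)
    intro g _
    rw [if_congr (hcond g) rfl rfl]
    by_cases h : r ≤ Setoid.ker (extb u0 g) <;> simp [h] <;> decide

lemma card_index (u0 : U) :
    Fintype.card ({x : U // x ≠ u0} → Bool) = 2 ^ (Fintype.card U - 1) := by
  rw [Fintype.card_fun, Fintype.card_bool]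
  congr 1
  have : Fintype.card {x : U // ¬ x = u0} = Fintype.card U - Fintype.card {x : U // x = u0} :=
    Fintype.card_subtype_compl _
  rw [Fintype.card_subtype_eq] at this
  exact this

set_option maxHeartbeats 1000000 in
lemma key (U : Type*) [Fintype U] (A : Finset (Setoid U)) :
    ∃ B : Finset (Setoid U), B ⊆ A ∧ B.card ≤ 2 ^ (Fintype.card U - 1) ∧
      ∀ p ∈ A, ∀ q : Setoid U, p ⊔ q = ⊤ → ∃ p' ∈ B, p' ⊔ q = ⊤ := by
  cases isEmpty_or_nonempty U with
  | inl hU =>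
    refine ⟨A, subset_rfl, ?_, fun p hp q hq => ⟨p, hp, hq⟩⟩
    have hsub : Subsingleton (Setoid U) :=
      ⟨fun r s => Setoid.ext fun a => isEmptyElim a⟩
    calc A.card ≤ 1 := Finset.card_le_one.mpr fun a _ b _ => Subsingleton.elim a b
    _ ≤ 2 ^ (Fintype.card U - 1) := Nat.one_le_two_pow
  | inr hU =>
    obtain ⟨u0⟩ := hU
    obtain ⟨b, hbs, hspan, hind⟩ :=
      exists_linearIndependent (ZMod 2) (vec u0 '' (↑A : Set (Setoid U)))
    have hfin : b.Finite := hind.setFinite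
    classical
    set pick : (({x : U // x ≠ u0} → Bool) → ZMod 2) → Setoid U := fun w =>
      if h : ∃ p ∈ A, vec u0 p = w then h.choose else ⊤ with hpick
    have hpick_mem : ∀ w ∈ b, pick w ∈ A ∧ vec u0 (pick w) = w := by
      intro w hw
      obtain ⟨p, hp, hvp⟩ := hbs hw
      have h : ∃ p ∈ A, vec u0 p = w := ⟨p, hp, hvp⟩
      rw [hpick]
      simp only [dif_pos h]
      exact h.choose_spec
    refine ⟨hfin.toFinset.image pick, ?_, ?_, ?_⟩
    · intro p hp
      obtain ⟨w, hw, rfl⟩ := Finset.mem_image.mp hp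
      exact (hpick_mem w (hfin.mem_toFinset.mp hw)).1
    · calc (hfin.toFinset.image pick).card ≤ hfin.toFinset.card := Finset.card_image_le
      _ = Fintype.card b := hfin.card_toFinset
      _ ≤ Module.finrank (ZMod 2) ((({x : U // x ≠ u0} → Bool) → ZMod 2)) :=
          LinearIndependent.fintype_card_le_finrank hind
      _ = 2 ^ (Fintype.card U - 1) := by
          rw [Module.finrank_pi, card_index]
    · intro p hp q hq
      by_contra hcon
      push_neg at hcon
      -- the bilinear pairing with q
      set L : (({x : U // x ≠ u0} → Bool) → ZMod 2) →ₗ[ZMod 2] ZMod 2 :=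
        { toFun := fun w => ∑ g, w g * vec u0 q g
          map_add' := by
            intro w1 w2
            simp [Pi.add_apply, add_mul, Finset.sum_add_distrib]
          map_smul' := by
            intro c w
            simp [Pi.smul_apply, smul_eq_mul, Finset.mul_sum, mul_assoc] } with hL
      have hLw : ∀ w : ({x : U // x ≠ u0} → Bool) → ZMod 2,
          L w = ∑ g, w g * vec u0 q g := fun w => rfl
      have hker : b ⊆ LinearMap.ker L := by
        intro w hw
        obtain ⟨hwA, hwv⟩ := hpick_mem w hw
        have hmem : pick w ∈ hfin.toFinset.image pick :=
          Finset.mem_image_of_mem pick (hfin.mem_toFinset.mpr hw)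
        have hne : pick w ⊔ q ≠ ⊤ := hcon (pick w) hmem
        have : L w = 0 := by
          rw [hLw w, ← hwv, innersum, if_neg hne]
        exact LinearMap.mem_ker.mpr this
      have hspanker : Submodule.span (ZMod 2) (vec u0 '' (↑A : Set (Setoid U)))
          ≤ LinearMap.ker L := by
        rw [← hspan]
        exact Submodule.span_le.mpr hker
      have hpmem : vec u0 p ∈ Submodule.span (ZMod 2) (vec u0 '' (↑A : Set (Setoid U))) :=
        Submodule.subset_span (Set.mem_image_of_mem _ hp)
      have hL0 : L (vec u0 p) = 0 := hspanker hpmem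
      have hL1 : L (vec u0 p) = 1 := by
        rw [hLw, innersum, if_pos hq]
      rw [hL0] at hL1
      exact one_ne_zero hL1.symm

end Stmt13Aux

/-- Representative sets for partitions (rank-based approach): there is an
operator that reduces any family `𝒜` of partitions of a finite set `U` to a
subfamily of size at most `2^{|U|-1}` preserving, for every partition `q`, the
existence of a member joining with `q` to the trivial one-block partition
(`⊤` in the partition lattice `Setoid U`). -/
theorem stmt13 (U : Type*) [Fintype U] :
    ∃ f : Finset (Setoid U) → Finset (Setoid U),
      ∀ A : Finset (Setoid U),
        f A ⊆ A ∧
        (f A).card ≤ 2 ^ (Fintype.card U - 1) ∧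
        ∀ p ∈ A, ∀ q : Setoid U, p ⊔ q = ⊤ →
          ∃ p' ∈ f A, p' ⊔ q = ⊤ := by
  exact ⟨fun A => (Stmt13Aux.key U A).choose, fun A => (Stmt13Aux.key U A).choose_spec⟩
end
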